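/- Suppose B divides both d and c, and for b = 1,…,B let X_i^{(b)} ∈ ℝ^{s×(d/B)} be the b-th block of d/B consecutive columns of X_i. For each m, let p_BFN(m) be the infimum over vectors w_{1bj} ∈ ℝ^{sd/B} and w_{2bj} ∈ ℝ^{c/B} (b = 1,…,B, j = 1,…,m) of Σ_{i=1}^n L([f^{(1)}(X_i) ⋯ f^{(B)}(X_i)], Y_i) + (β/2) Σ_{b=1}^B Σ_{j=1}^m (‖w_{1bj}‖₂² + ‖w_{2bj}‖₂²), where f^{(b)}(X_i) := Σ_{j=1}^m (circ(X_i^{(b)}) w_{1bj}) w_{2bj}ᵀ and [⋯] denotes horizontal concatenation. Then there exists m* ≤ (1/B)·min{sd, c} such that for every m ≥ m*, p_BFN(m) equals the infimum over Z_1,…,Z_B ∈ ℝ^{(sd/B)×(c/B)} of Σ_{i=1}^n L([circ(X_i^{(1)}) Z_1 ⋯ circ(X_i^{(B)}) Z_B], Y_i) + β Σ_{b=1}^B ‖Z_b‖_*. -/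

import Mathlib

open Matrix Pointwise Kronecker

noncomputable section

/-- Frobenius norm of a real matrix. -/
def frobNorm {m n : Type*} [Fintype m] [Fintype n] (A : Matrix m n ℝ) : ℝ :=
  Real.sqrt (∑ i, ∑ j, (A i j) ^ 2)

/-- Nuclear norm of a real matrix: the sum of its singular values, i.e. the square
roots of the eigenvalues of `Aᴴ * A`. -/
def nuclearNorm {m n : Type*} [Fintype m] [Fintype n] [DecidableEq n] (A : Matrix m n ℝ) : ℝ :=
  ∑ i, Real.sqrt ((Matrix.isHermitian_conjTranspose_mul_self A).eigenvalues i)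

/-- The constrained nuclear norm `‖Z‖_{*,K}`. -/
def cNuclearNorm {N ι κ : Type*} [Fintype N] [Fintype ι] [Fintype κ] [DecidableEq κ]
    (K : Matrix N ι ℝ) (Z : Matrix ι κ ℝ) : ℝ :=
  sInf {t : ℝ | 0 ≤ t ∧ Z ∈ t • convexHull ℝ
    {M : Matrix ι κ ℝ | ∃ u v, M = Matrix.vecMulVec u v ∧ (∀ r, 0 ≤ (K *ᵥ u) r) ∧
      nuclearNorm M ≤ 1}}

/-- The 0-1 diagonal matrix `diag(1{A u ≥ 0})`. -/
def gateArr {N q : Type*} [Fintype q] [DecidableEq N] (A : Matrix N q ℝ) (u : q → ℝ) :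
    Matrix N N ℝ :=
  Matrix.diagonal fun r => if 0 ≤ (A *ᵥ u) r then (1 : ℝ) else 0

/-- The set of hyperplane arrangements of a matrix `A`. -/
def arrSet {N q : Type*} [Fintype q] [DecidableEq N] (A : Matrix N q ℝ) :
    Set (Matrix N N ℝ) :=
  Set.range (gateArr A)

/-- Entrywise ReLU of a matrix. -/
def reluM {m n : Type*} (A : Matrix m n ℝ) : Matrix m n ℝ :=
  Matrix.of fun i j => max (A i j) 0

/-- Entrywise ReLU of a vector. -/
def reluV {m : Type*} (v : m → ℝ) : m → ℝ := fun i => max (v i) 0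

/-- `circ(X)`: horizontal concatenation of all circulant row-shifts of `X`. -/
def circM {s p : ℕ} (X : Matrix (Fin s) (Fin p) ℝ) : Matrix (Fin s) (Fin s × Fin p) ℝ :=
  Matrix.of fun i q => X (i + q.1) q.2

open Finset

/-! For a factorisation `Z = Σⱼ uⱼ vⱼᵀ` one has `2 ‖Z‖_* ≤ Σⱼ (‖uⱼ‖² + ‖vⱼ‖²)`: pairing `Z` with
its polar factor `Q` (a contraction with `⟨Q, Z⟩ = ‖Z‖_*`) gives
`2 ‖Z‖_* = Σⱼ 2 uⱼᵀ Q vⱼ ≤ Σⱼ (‖uⱼ‖² + ‖Q vⱼ‖²)`. Equality holds for the balanced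
factorisation `uᵢ = σᵢ^{-1/2} Z vᵢ'`, `vᵢ = σᵢ^{1/2} vᵢ'` built from the singular value
decomposition, which has `rank Z ≤ min (s·d/B) (c/B)` nonzero terms. The B-FNO prediction depends
on the weights of block `b` only through `Z_b = Σⱼ w_{1bj} w_{2bj}ᵀ`, so the two infima agree. -/

lemma transpose_mul_self_apply_self {m n R : Type*} [Fintype m] [CommSemiring R]
    (M : Matrix m n R) (j : n) : (Mᵀ * M) j j = ∑ r, M r j ^ 2 := by
  simp [mul_apply, sq]

section SingularValueDecomposition

variable {m n : Type*} [Fintype m] [Fintype n] [DecidableEq n] (A : Matrix m n ℝ)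

def rightSingularVectors : Matrix n n ℝ :=
  (isHermitian_conjTranspose_mul_self A).eigenvectorUnitary

def singularValue (i : n) : ℝ :=
  √((isHermitian_conjTranspose_mul_self A).eigenvalues i)

lemma nuclearNorm_eq_sum_singularValue : nuclearNorm A = ∑ i, singularValue A i := rfl

lemma singularValue_nonneg (i : n) : 0 ≤ singularValue A i := Real.sqrt_nonneg _

lemma transpose_rightSingularVectors_mul_self :
    (rightSingularVectors A)ᵀ * rightSingularVectors A = 1 := by
  simpa [rightSingularVectors, star_eq_conjTranspose, conjTranspose_eq_transpose_of_trivial] using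
    mem_unitaryGroup_iff'.mp (isHermitian_conjTranspose_mul_self A).eigenvectorUnitary.2

lemma rightSingularVectors_mul_transpose_self :
    rightSingularVectors A * (rightSingularVectors A)ᵀ = 1 := by
  simpa [rightSingularVectors, star_eq_conjTranspose, conjTranspose_eq_transpose_of_trivial] using
    mem_unitaryGroup_iff.mp (isHermitian_conjTranspose_mul_self A).eigenvectorUnitary.2

lemma mul_rightSingularVectors_transpose_mul_self :
    (A * rightSingularVectors A)ᵀ * (A * rightSingularVectors A) =
      diagonal fun i => singularValue A i ^ 2 := by
  have h := (isHermitian_conjTranspose_mul_self A).conjStarAlgAut_star_eigenvectorUnitary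
  simp only [Unitary.conjStarAlgAut_apply, Unitary.coe_star, star_star,
    RCLike.ofReal_real_eq_id, Function.id_comp] at h
  have hsq : (fun i => singularValue A i ^ 2) =
      (isHermitian_conjTranspose_mul_self A).eigenvalues :=
    funext fun i => Real.sq_sqrt (eigenvalues_conjTranspose_mul_self_nonneg A i)
  rw [hsq, ← h]
  simp only [rightSingularVectors, star_eq_conjTranspose, conjTranspose_eq_transpose_of_trivial,
    transpose_mul, Matrix.mul_assoc]

lemma card_singularValue_ne_zero_le :
    #{i | singularValue A i ≠ 0} ≤ min (Fintype.card m) (Fintype.card n) := by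
  have hrank : (Aᴴ * A).rank = A.rank := by
    rw [conjTranspose_eq_transpose_of_trivial, rank_transpose_mul_self]
  simp only [← Fintype.card_subtype, singularValue, ne_eq,
    Real.sqrt_eq_zero (eigenvalues_conjTranspose_mul_self_nonneg A _)]
  rw [← (isHermitian_conjTranspose_mul_self A).rank_eq_card_non_zero_eigs, hrank]
  exact le_min A.rank_le_card_height A.rank_le_card_width

lemma mul_rightSingularVectors_apply_eq_zero {j : n} (hj : singularValue A j = 0) (r : m) :
    (A * rightSingularVectors A) r j = 0 := by
  have h := congrFun (congrFun (mul_rightSingularVectors_transpose_mul_self A) j) j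
  rw [transpose_mul_self_apply_self, diagonal_apply_eq, hj, zero_pow two_ne_zero,
    Finset.sum_eq_zero_iff_of_nonneg fun r _ => sq_nonneg _] at h
  exact pow_eq_zero_iff two_ne_zero |>.mp (h r (Finset.mem_univ r))

end SingularValueDecomposition

lemma dotProduct_mulVec_self {m n R : Type*} [Fintype m] [Fintype n] [CommSemiring R]
    (M : Matrix m n R) (x : n → R) :
    (M *ᵥ x) ⬝ᵥ (M *ᵥ x) = x ⬝ᵥ ((Mᵀ * M) *ᵥ x) := by
  rw [dotProduct_mulVec, ← mulVec_transpose, ← mulVec_mulVec, dotProduct_comm]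

lemma two_mul_dotProduct_le {n : Type*} [Fintype n] (x y : n → ℝ) :
    2 * (x ⬝ᵥ y) ≤ x ⬝ᵥ x + y ⬝ᵥ y := by
  simp only [dotProduct, Finset.mul_sum, ← Finset.sum_add_distrib]
  exact Finset.sum_le_sum fun i _ => by nlinarith [sq_nonneg (x i - y i)]

section PolarFactor

variable {m n : Type*} [Fintype m] [Fintype n] [DecidableEq n] (A : Matrix m n ℝ)

/-- `A V Σ⁻¹ Vᵀ`; since `0⁻¹ = 0` this is the partial isometry `U Vᵀ` of the compact SVD
`A = U Σ Vᵀ`. -/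
def polarFactor : Matrix m n ℝ :=
  A * rightSingularVectors A * diagonal (fun i => (singularValue A i)⁻¹) *
    (rightSingularVectors A)ᵀ

lemma trace_transpose_polarFactor_mul : trace ((polarFactor A)ᵀ * A) = nuclearNorm A := by
  unfold polarFactor
  set V := rightSingularVectors A
  set D := diagonal fun i => (singularValue A i)⁻¹
  calc trace ((A * V * D * Vᵀ)ᵀ * A)
      = trace (V * (D * ((A * V)ᵀ * A))) := by
        simp only [D, transpose_mul, transpose_transpose, diagonal_transpose, Matrix.mul_assoc]
    _ = trace (D * ((A * V)ᵀ * (A * V))) := by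
        rw [trace_mul_comm]
        simp only [Matrix.mul_assoc]
    _ = nuclearNorm A := by
        rw [mul_rightSingularVectors_transpose_mul_self, diagonal_mul_diagonal, trace_diagonal,
          nuclearNorm_eq_sum_singularValue]
        simp only [sq, ← mul_assoc, inv_mul_mul_self]

lemma polarFactor_mulVec_dotProduct_le (x : n → ℝ) :
    (polarFactor A *ᵥ x) ⬝ᵥ (polarFactor A *ᵥ x) ≤ x ⬝ᵥ x := by
  unfold polarFactor
  set V := rightSingularVectors A
  set y := Vᵀ *ᵥ x
  have hQx : (A * V * diagonal (fun i => (singularValue A i)⁻¹) * Vᵀ) *ᵥ x =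
      (A * V) *ᵥ (diagonal (fun i => (singularValue A i)⁻¹) *ᵥ y) := by
    simp only [y, mulVec_mulVec, Matrix.mul_assoc]
  have hy : y ⬝ᵥ y = x ⬝ᵥ x := by
    rw [dotProduct_mulVec_self, transpose_transpose, rightSingularVectors_mul_transpose_self,
      one_mulVec]
  rw [hQx, dotProduct_mulVec_self, mul_rightSingularVectors_transpose_mul_self, ← hy]
  simp only [dotProduct, mulVec_diagonal]
  refine Finset.sum_le_sum fun i _ => ?_
  rcases eq_or_ne (singularValue A i) 0 with h | h
  · simp [h, mul_self_nonneg]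
  · exact le_of_eq (by field_simp)

end PolarFactor

lemma sum_sq_eq_dotProduct_self {n R : Type*} [Fintype n] [CommSemiring R] (x : n → R) :
    ∑ i, x i ^ 2 = x ⬝ᵥ x := by
  simp [dotProduct, sq]

lemma mul_transpose_eq_sum_vecMulVec {m n k R : Type*} [Fintype k] [CommSemiring R]
    (P : Matrix m k R) (Q : Matrix n k R) : P * Qᵀ = ∑ i, vecMulVec (Pᵀ i) (Qᵀ i) := by
  ext a b
  simp [mul_apply, vecMulVec_apply, Matrix.sum_apply]

lemma inv_sqrt_mul_sq_mul_inv_sqrt {a : ℝ} (ha : 0 ≤ a) : (√a)⁻¹ * a ^ 2 * (√a)⁻¹ = a := by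
  obtain ⟨t, ht, rfl⟩ : ∃ t, 0 ≤ t ∧ a = t ^ 2 := ⟨√a, Real.sqrt_nonneg a, (Real.sq_sqrt ha).symm⟩
  rw [Real.sqrt_sq ht]
  rcases eq_or_ne t 0 with rfl | ht0
  · simp
  · field_simp

lemma exists_fin_eq_sum_of_support_subset {ι α : Type*} [Fintype ι] [Zero α] (p : ι → α)
    (s : Finset ι) (hp : ∀ i ∉ s, p i = 0) {k : ℕ} (hk : s.card ≤ k) :
    ∃ q : Fin k → α, ∀ F : α → ℝ, F 0 = 0 → ∑ j, F (q j) = ∑ i, F (p i) := by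
  obtain ⟨e⟩ : Nonempty (s ↪ Fin k) :=
    Function.Embedding.nonempty_of_card_le (by simpa using hk)
  refine ⟨Function.extend e (fun i => p i) 0, fun F hF => ?_⟩
  calc ∑ j, F (Function.extend e (fun i => p i) 0 j)
      = ∑ i : s, F (p i) := by
        refine (Fintype.sum_of_injective e e.injective (fun i => F (p i)) _
          (fun j hj => ?_) fun i => ?_).symm
        · rw [Function.extend_apply' _ _ _ fun ⟨i, hi⟩ => hj ⟨i, hi⟩, Pi.zero_apply, hF]
        · rw [e.injective.extend_apply]
    _ = ∑ i, F (p i) := by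
        rw [Finset.sum_coe_sort s fun i => F (p i)]
        exact Finset.sum_subset (Finset.subset_univ s) fun i _ hi => by rw [hp i hi, hF]

section NuclearNorm

variable {m n : Type*} [Fintype m] [Fintype n] [DecidableEq n] (A : Matrix m n ℝ)

lemma two_mul_nuclearNorm_le {k : Type*} [Fintype k] (u : k → m → ℝ) (v : k → n → ℝ) :
    2 * nuclearNorm (∑ j, vecMulVec (u j) (v j)) ≤ ∑ j, (∑ r, u j r ^ 2 + ∑ r, v j r ^ 2) := by
  set Z := ∑ j, vecMulVec (u j) (v j)
  have hdual : nuclearNorm Z = ∑ j, u j ⬝ᵥ (polarFactor Z *ᵥ v j) := by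
    rw [← trace_transpose_polarFactor_mul, Matrix.mul_sum, trace_sum]
    refine Finset.sum_congr rfl fun j _ => ?_
    rw [mul_vecMulVec, trace_vecMulVec, mulVec_transpose, ← dotProduct_mulVec]
  rw [hdual, Finset.mul_sum]
  refine Finset.sum_le_sum fun j _ => ?_
  rw [sum_sq_eq_dotProduct_self, sum_sq_eq_dotProduct_self]
  linarith [two_mul_dotProduct_le (u j) (polarFactor Z *ᵥ v j),
    polarFactor_mulVec_dotProduct_le Z (v j)]

lemma exists_balanced_factorization :
    ∃ (u : n → m → ℝ) (v : n → n → ℝ), ∑ i, vecMulVec (u i) (v i) = A ∧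
      ∀ i, ∑ r, u i r ^ 2 = singularValue A i ∧ ∑ r, v i r ^ 2 = singularValue A i := by
  set V := rightSingularVectors A
  set σ := singularValue A
  set P := A * V * diagonal fun i => (√(σ i))⁻¹
  set Q := V * diagonal fun i => √(σ i)
  have hAV : A * V * diagonal (fun i => (√(σ i))⁻¹ * √(σ i)) = A * V := by
    ext r i
    rw [mul_diagonal]
    rcases eq_or_ne (σ i) 0 with h | h
    · rw [mul_rightSingularVectors_apply_eq_zero A h, zero_mul]
    · rw [inv_mul_cancel₀ (Real.sqrt_pos.2 ((singularValue_nonneg A i).lt_of_ne' h)).ne', mul_one]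
  refine ⟨fun i => Pᵀ i, fun i => Qᵀ i, ?_, fun i => ⟨?_, ?_⟩⟩
  · calc ∑ i, vecMulVec (Pᵀ i) (Qᵀ i)
        = A * V * diagonal (fun i => (√(σ i))⁻¹ * √(σ i)) * Vᵀ := by
          rw [← mul_transpose_eq_sum_vecMulVec]
          simp only [P, Q, transpose_mul, diagonal_transpose,
            ← diagonal_mul_diagonal, Matrix.mul_assoc]
      _ = A := by
          rw [hAV, Matrix.mul_assoc, rightSingularVectors_mul_transpose_self, Matrix.mul_one]
  · have hP : Pᵀ * P = diagonal σ := by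
      calc Pᵀ * P = (diagonal fun i => (√(σ i))⁻¹) * ((A * V)ᵀ * (A * V)) *
            diagonal fun i => (√(σ i))⁻¹ := by
            simp only [P, transpose_mul, diagonal_transpose, Matrix.mul_assoc]
        _ = diagonal σ := by
            rw [mul_rightSingularVectors_transpose_mul_self, diagonal_mul_diagonal,
              diagonal_mul_diagonal]
            exact congrArg diagonal (funext fun i => inv_sqrt_mul_sq_mul_inv_sqrt
              (singularValue_nonneg A i))
    simpa [transpose_mul_self_apply_self] using congrFun (congrFun hP i) i
  · have hQ : Qᵀ * Q = diagonal σ := by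
      calc Qᵀ * Q = (diagonal fun i => √(σ i)) * (Vᵀ * V) * diagonal fun i => √(σ i) := by
            simp only [Q, transpose_mul, diagonal_transpose, Matrix.mul_assoc]
        _ = diagonal σ := by
            rw [transpose_rightSingularVectors_mul_self, Matrix.mul_one, diagonal_mul_diagonal]
            exact congrArg diagonal (funext fun i => Real.mul_self_sqrt
              (singularValue_nonneg A i))
    simpa [transpose_mul_self_apply_self] using congrFun (congrFun hQ i) i

lemma exists_sum_vecMulVec_eq {k : ℕ} (hk : min (Fintype.card m) (Fintype.card n) ≤ k) :
    ∃ (u : Fin k → m → ℝ) (v : Fin k → n → ℝ), ∑ j, vecMulVec (u j) (v j) = A ∧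
      ∑ j, (∑ r, u j r ^ 2 + ∑ r, v j r ^ 2) = 2 * nuclearNorm A := by
  obtain ⟨u, v, hA, hnorm⟩ := exists_balanced_factorization A
  have hvanish : ∀ i ∉ ({i | singularValue A i ≠ 0} : Finset n), (u i, v i) = 0 := by
    intro i hi
    obtain ⟨hu, hv⟩ := hnorm i
    have hσ : singularValue A i = 0 := by simpa using hi
    rw [sum_sq_eq_dotProduct_self, hσ, dotProduct_self_eq_zero] at hu hv
    simp [hu, hv]
  obtain ⟨q, hq⟩ := exists_fin_eq_sum_of_support_subset (fun i => (u i, v i)) _ hvanish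
    ((card_singularValue_ne_zero_le A).trans hk)
  refine ⟨fun j => (q j).1, fun j => (q j).2, ?_, ?_⟩
  · rw [← hA]
    ext a b
    simp only [Matrix.sum_apply, vecMulVec_apply]
    exact hq (fun p => p.1 a * p.2 b) (by simp)
  · beta_reduce
    rw [hq (fun p => ∑ r, p.1 r ^ 2 + ∑ r, p.2 r ^ 2) (by simp),
      nuclearNorm_eq_sum_singularValue, Finset.mul_sum]
    simp only [hnorm, two_mul]

end NuclearNorm

/-- Feature and output columns are indexed block-major by `Fin B × Fin dB` and `Fin B × Fin cB`
(`d = B·dB`, `c = B·cB`), so `q.1` is the block of column `q`. -/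
theorem linear_bfno_convex_dual_general
    (n s B dB cB : ℕ)
    (β : ℝ) (hβ : 0 < β)
    (X : Fin n → Matrix (Fin s) (Fin B × Fin dB) ℝ)
    (Y : Fin n → Matrix (Fin s) (Fin B × Fin cB) ℝ)
    (L : Matrix (Fin s) (Fin B × Fin cB) ℝ → Matrix (Fin s) (Fin B × Fin cB) ℝ → ℝ) :
    ∃ mstar : ℕ, mstar ≤ min (s * dB) cB ∧ ∀ m : ℕ, mstar ≤ m →
      (⨅ W : (Fin B → Fin m → (Fin s × Fin dB → ℝ)) × (Fin B → Fin m → (Fin cB → ℝ)),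
        (∑ i, L (Matrix.of fun r q =>
            (∑ j, Matrix.vecMulVec
                (circM (Matrix.of fun a k => X i a (q.1, k)) *ᵥ W.1 q.1 j)
                (W.2 q.1 j)) r q.2) (Y i)) +
          (β / 2) * ∑ b, ∑ j, ((∑ r, (W.1 b j r) ^ 2) + (∑ r, (W.2 b j r) ^ 2)))
      =
      (⨅ Z : Fin B → Matrix (Fin s × Fin dB) (Fin cB) ℝ,
        (∑ i, L (Matrix.of fun r q =>
            (circM (Matrix.of fun a k => X i a (q.1, k)) * Z q.1) r q.2) (Y i)) +
          β * ∑ b, nuclearNorm (Z b)) := by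
  refine ⟨min (s * dB) cB, le_rfl, fun m hm => ?_⟩
  refine csInf_eq_csInf_of_forall_exists_le ?_ ?_
  · rintro _ ⟨⟨u, v⟩, rfl⟩
    refine ⟨_, ⟨fun b => ∑ j, vecMulVec (u b j) (v b j), rfl⟩, ?_⟩
    simp only [Matrix.mul_sum, mul_vecMulVec]
    refine add_le_add le_rfl ?_
    calc β * ∑ b, nuclearNorm (∑ j, vecMulVec (u b j) (v b j))
        = β / 2 * ∑ b, 2 * nuclearNorm (∑ j, vecMulVec (u b j) (v b j)) := by
          rw [← Finset.mul_sum]; ring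
      _ ≤ _ := by gcongr with b; exact two_mul_nuclearNorm_le (u b) (v b)
  · rintro _ ⟨Z, rfl⟩
    choose u v hZ hnorm using fun b =>
      exists_sum_vecMulVec_eq (Z b) (k := m) (by simpa using hm)
    refine ⟨_, ⟨(u, v), rfl⟩, le_of_eq ?_⟩
    simp only [← hZ, Matrix.mul_sum, mul_vecMulVec, hnorm, ← Finset.mul_sum]
    ring

/-- **Theorem 7 (linear-activation block FNO / B-FNO).**
`B` divides `d` and `c`; we encode `d = B·dB` and `c = B·cB` by indexing
feature columns by `Fin B × Fin dB` (block-major) and output columns by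
`Fin B × Fin cB`.  `Xᵢ^{(b)}` is the `b`-th column block of `Xᵢ`.  For
`m ≥ m*` with `m* ≤ (1/B)·min {sd, c} = min {s·dB, cB}`, the non-convex
linear B-FNO problem equals a convex program with groupwise nuclear norms. -/
theorem linear_bfno_convex_dual
    (n s B dB cB : ℕ) (hn : 0 < n) (hs : 0 < s) (hB : 0 < B) (hdB : 0 < dB) (hcB : 0 < cB)
    (β : ℝ) (hβ : 0 < β)
    (X : Fin n → Matrix (Fin s) (Fin B × Fin dB) ℝ)
    (Y : Fin n → Matrix (Fin s) (Fin B × Fin cB) ℝ)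
    (L : Matrix (Fin s) (Fin B × Fin cB) ℝ → Matrix (Fin s) (Fin B × Fin cB) ℝ → ℝ)
    (hconv : ∀ Yi, ConvexOn ℝ Set.univ fun R => L R Yi)
    (hlsc : ∀ Yi, LowerSemicontinuous fun R => L R Yi) :
    ∃ mstar : ℕ, mstar ≤ min (s * dB) cB ∧ ∀ m : ℕ, mstar ≤ m →
      (⨅ W : (Fin B → Fin m → (Fin s × Fin dB → ℝ)) × (Fin B → Fin m → (Fin cB → ℝ)),
        (∑ i, L (Matrix.of fun r q =>
            (∑ j, Matrix.vecMulVec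
                (circM (Matrix.of fun a k => X i a (q.1, k)) *ᵥ W.1 q.1 j)
                (W.2 q.1 j)) r q.2) (Y i)) +
          (β / 2) * ∑ b, ∑ j, ((∑ r, (W.1 b j r) ^ 2) + (∑ r, (W.2 b j r) ^ 2)))
      =
      (⨅ Z : Fin B → Matrix (Fin s × Fin dB) (Fin cB) ℝ,
        (∑ i, L (Matrix.of fun r q =>
            (circM (Matrix.of fun a k => X i a (q.1, k)) * Z q.1) r q.2) (Y i)) +
          β * ∑ b, nuclearNorm (Z b)) :=
  linear_bfno_convex_dual_general n s B dB cB β hβ X Y L
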